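/- arXiv:1412.7885 — 3 statements merged into one kernel-verified Lean document; each statement's English description precedes it below -/
import Mathlib

section
/- For integers 1 ≤ k and n ≥ 2k, if a family F of k-element subsets of {1,...,n} is intersecting (contains no two disjoint sets), then |F| ≤ C(n-1, k-1). -/
/-! Mathlib proves the theorem for families on `Fin n` (via Kruskal–Katona). A family of subsets
of a finite set `s` is transported there by pulling it back along an enumeration
`Fin #s ↪ α` of `s`, which preserves its size, its uniformity and the intersection property. -/

open Function

namespace Finset

variable {α β : Type*}

theorem card_preimage_map_of_forall_subset {f : α ↪ β} {t : Finset α} {𝒜 : Finset (Finset β)}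
    (h𝒜 : ∀ A ∈ 𝒜, A ⊆ t.map f) :
    #(𝒜.preimage (map f) (map_injective f).injOn) = #𝒜 := by
  classical
  rw [card_preimage, filter_true_of_mem]
  intro A hA
  obtain ⟨u, -, rfl⟩ := subset_map_iff.1 (h𝒜 A hA)
  exact ⟨u, rfl⟩

theorem intersecting_preimage_map [DecidableEq α] [DecidableEq β] {f : α ↪ β}
    {𝒜 : Finset (Finset β)} (h𝒜 : (𝒜 : Set (Finset β)).Intersecting) :
    (↑(𝒜.preimage (map f) (map_injective f).injOn) : Set (Finset α)).Intersecting :=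
  fun _ hA _ hB hAB => h𝒜 (mem_preimage.1 hA) (mem_preimage.1 hB) ((disjoint_map f).2 hAB)

theorem sized_preimage_map {f : α ↪ β} {𝒜 : Finset (Finset β)} {r : ℕ}
    (h𝒜 : (𝒜 : Set (Finset β)).Sized r) :
    (↑(𝒜.preimage (map f) (map_injective f).injOn) : Set (Finset α)).Sized r :=
  fun _ hA => card_map f ▸ h𝒜 (mem_preimage.1 hA)

theorem erdos_ko_rado_of_forall_subset [DecidableEq α] {s : Finset α} {𝒜 : Finset (Finset α)}
    {r : ℕ} (h𝒜s : ∀ A ∈ 𝒜, A ⊆ s) (h𝒜 : (𝒜 : Set (Finset α)).Intersecting)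
    (h₂ : (𝒜 : Set (Finset α)).Sized r) (h₃ : r ≤ #s / 2) :
    #𝒜 ≤ (#s - 1).choose (r - 1) := by
  let e : Fin #s ↪ α := s.equivFin.symm.toEmbedding.trans (Embedding.subtype _)
  have he : univ.map e = s := by
    rw [← map_map, map_univ_equiv, univ_eq_attach, attach_map_val]
  rw [← card_preimage_map_of_forall_subset (f := e) (he ▸ h𝒜s)]
  exact erdos_ko_rado (intersecting_preimage_map h𝒜) (sized_preimage_map h₂) h₃

end Finset

open Finset

theorem ekr_general (n k : ℕ) (hn : 2 * k ≤ n)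
    (F : Finset (Finset ℕ))
    (hF : ∀ A ∈ F, A ⊆ Finset.range n ∧ A.card = k)
    (hint : ∀ A ∈ F, ∀ B ∈ F, (A ∩ B).Nonempty) :
    F.card ≤ (n - 1).choose (k - 1) := by
  have h := erdos_ko_rado_of_forall_subset (s := range n) (fun A hA => (hF A hA).1)
    (fun A hA B hB => not_disjoint_iff_nonempty_inter.2 (hint A hA B hB))
    (fun A hA => (hF A hA).2) (by rw [card_range]; omega)
  rwa [card_range] at h

/-- Erdős–Ko–Rado: an intersecting family of k-subsets of {1,...,n} with n ≥ 2k
has at most C(n-1, k-1) members. -/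
theorem ekr (n k : ℕ) (hk : 1 ≤ k) (hn : 2 * k ≤ n)
    (F : Finset (Finset ℕ))
    (hF : ∀ A ∈ F, A ⊆ Finset.range n ∧ A.card = k)
    (hint : ∀ A ∈ F, ∀ B ∈ F, (A ∩ B).Nonempty) :
    F.card ≤ (n - 1).choose (k - 1) :=
  ekr_general n k hn F hF hint
end

section
/- For n ≥ 2k ≥ 2 and each i ∈ {1,...,n}, the vector v defined on k-subsets F by v(F) = 1_{i ∈ F} − k/n is an eigenvector of the adjacency matrix of the Kneser graph K(n,k) with eigenvalue −C(n-k-1, k-1). -/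
/-!
The neighbours of a `k`-set `F` in the Kneser graph are exactly the `k`-subsets of `Fᶜ`, a set of
size `n - k` (for `k ≥ 1` disjointness already forces `G ≠ F`). Summing `v` over them, the
constant part contributes `-C(n-k, k) · k/n`, and the indicator part counts the `k`-subsets of
`Fᶜ` containing `i`: none if `i ∈ F`, and `C(n-k-1, k-1)` otherwise. In both cases the claim
reduces to the identity `(n - k) · C(n-k-1, k-1) = k · C(n-k, k)`.
-/

open Finset Matrix

theorem Nat.mul_sub_one_choose_sub_one (m k : ℕ) (hk : 1 ≤ k) :
    m * (m - 1).choose (k - 1) = k * m.choose k := by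
  obtain ⟨j, rfl⟩ := Nat.exists_eq_add_of_le' hk
  rcases m with _ | m
  · simp
  · simpa [mul_comm] using Nat.add_one_mul_choose_eq m j

namespace Finset

variable {α : Type*} [DecidableEq α]

theorem card_filter_mem_powersetCard {s : Finset α} {a : α} (ha : a ∈ s) {k : ℕ} (hk : 1 ≤ k) :
    #{t ∈ s.powersetCard k | a ∈ t} = (#s - 1).choose (k - 1) := by
  simpa [singleton_subset_iff] using
    card_filter_powersetCard_subset {a} s k (singleton_subset_iff.2 ha) (by simpa using hk)

variable [Fintype α] {R : Type*} [NonAssocSemiring R]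

theorem sum_ite_ne_and_disjoint_mul {k : ℕ} (hk : 1 ≤ k) (F : {s : Finset α // #s = k})
    (f : Finset α → R) :
    ∑ G : {s : Finset α // #s = k}, (if F ≠ G ∧ Disjoint F.1 G.1 then 1 else 0) * f G.1 =
      ∑ G ∈ F.1ᶜ.powersetCard k, f G := by
  have hne : ∀ G : {s : Finset α // #s = k}, Disjoint F.1 G.1 → F ≠ G := by
    rintro G hFF rfl
    have hk0 : k = 0 := by rw [← F.2, (disjoint_self_iff_empty _).1 hFF, card_empty]
    omega
  have hsupp : {G ∈ (univ : Finset α).powersetCard k | Disjoint F.1 G} = F.1ᶜ.powersetCard k := by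
    ext G
    simp [mem_powersetCard, subset_compl_iff_disjoint_left, disjoint_comm, and_comm]
  rw [← hsupp, sum_filter, sum_subtype _ (fun _ => mem_powersetCard_univ)]
  refine sum_congr rfl fun G _ => ?_
  by_cases hFG : Disjoint F.1 G.1 <;> simp [hFG, hne]

end Finset

section Kneser

variable (α : Type*) [Fintype α] [DecidableEq α]

noncomputable def kneserAdjMatrix (k : ℕ) : Matrix {s : Finset α // #s = k} {s : Finset α // #s = k} ℝ :=
  fun G H => if G ≠ H ∧ Disjoint G.1 H.1 then 1 else 0

noncomputable def centeredIndicator (k : ℕ) (i : α) : {s : Finset α // #s = k} → ℝ :=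
  fun G => (if i ∈ G.1 then 1 else 0) - k / Fintype.card α

theorem kneserAdjMatrix_mulVec_centeredIndicator {k : ℕ} (hk : 1 ≤ k) (i : α) :
    kneserAdjMatrix α k *ᵥ centeredIndicator α k i =
      (-((Fintype.card α - k - 1).choose (k - 1) : ℝ)) • centeredIndicator α k i := by
  funext F
  simp only [mulVec, dotProduct, kneserAdjMatrix, centeredIndicator, Pi.smul_apply, smul_eq_mul]
  set n := Fintype.card α
  have hkn : k ≤ n := F.2 ▸ card_le_univ F.1
  have hn : (n : ℝ) ≠ 0 := by norm_cast; omega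
  have hcompl : #F.1ᶜ = n - k := by rw [card_compl, F.2]
  have hchoose : ((n : ℝ) - k) * (n - k - 1).choose (k - 1) = k * (n - k).choose k := by
    exact_mod_cast Nat.mul_sub_one_choose_sub_one (n - k) k hk
  rw [Finset.sum_ite_ne_and_disjoint_mul hk F (fun G => (if i ∈ G then (1 : ℝ) else 0) - k / n),
    sum_sub_distrib, sum_boole, sum_const, card_powersetCard, hcompl, nsmul_eq_mul]
  by_cases hi : i ∈ F.1
  · have hnone : {G ∈ F.1ᶜ.powersetCard k | i ∈ G} = ∅ :=
      filter_eq_empty_iff.2 fun G hG hiG => mem_compl.1 ((mem_powersetCard.1 hG).1 hiG) hi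
    rw [hnone, card_empty, if_pos hi]
    field_simp
    linear_combination hchoose
  · rw [card_filter_mem_powersetCard (mem_compl.2 hi) hk, hcompl, if_neg hi]
    field_simp
    linear_combination hchoose

end Kneser

theorem kneser_second_eigenvector_general (n k : ℕ) (hk : 1 ≤ k)
    (i : Fin n) :
    let A : Matrix {s : Finset (Fin n) // s.card = k}
        {s : Finset (Fin n) // s.card = k} ℝ :=
      fun G H => if G ≠ H ∧ Disjoint G.1 H.1 then 1 else 0
    let v : {s : Finset (Fin n) // s.card = k} → ℝ :=
      fun G => (if i ∈ G.1 then 1 else 0) - (k : ℝ) / n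
    A *ᵥ v = (-(((n - k - 1).choose (k - 1) : ℝ))) • v := by
  have h := kneserAdjMatrix_mulVec_centeredIndicator (Fin n) hk i
  unfold kneserAdjMatrix centeredIndicator at h
  rwa [Fintype.card_fin] at h

/-- For each i, the vector F ↦ 1_{i ∈ F} − k/n is an eigenvector of the Kneser
adjacency matrix with eigenvalue −C(n-k-1, k-1). -/
theorem kneser_second_eigenvector (n k : ℕ) (hk : 1 ≤ k) (hn : 2 * k ≤ n)
    (i : Fin n) :
    let A : Matrix {s : Finset (Fin n) // s.card = k}
        {s : Finset (Fin n) // s.card = k} ℝ :=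
      fun G H => if G ≠ H ∧ Disjoint G.1 H.1 then 1 else 0
    let v : {s : Finset (Fin n) // s.card = k} → ℝ :=
      fun G => (if i ∈ G.1 then 1 else 0) - (k : ℝ) / n
    A *ᵥ v = (-(((n - k - 1).choose (k - 1) : ℝ))) • v :=
  kneser_second_eigenvector_general n k hk i
end

section
/- Let n ≥ 2k ≥ 2 and let G be a spanning subgraph of the Kneser graph K(n,k) with independence number α(G) = C(n-1, k-1). Then G has at least ((n-k)/(2k)) · C(n,k) edges. -/
/-!
Fix a vertex `F` of `G` and a point `x ∉ F`. The star of `x` (all `k`-sets containing `x`) is an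
independent set of `K(n,k)`, hence of `G`, of the maximum size `C(n-1,k-1)`; as `F` is not in it,
`F` must have a `G`-neighbour containing `x`. So the `G`-neighbours of `F` cover the `n - k`
points outside `F`, each covering only `k` of them, and `k · deg F ≥ n - k`. Summing over the
`C(n,k)` vertices gives `2k · |E(G)| ≥ (n - k) · C(n,k)`.
-/

open Finset

/-- The Kneser graph K(n,k). -/
def kneser (n k : ℕ) : SimpleGraph {s : Finset (Fin n) // s.card = k} where
  Adj A B := A ≠ B ∧ Disjoint A.1 B.1
  symm := ⟨fun _ _ h => ⟨h.1.symm, h.2.symm⟩⟩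
  loopless := ⟨fun _ h => h.1 rfl⟩

namespace SimpleGraph

variable {V : Type*} {G : SimpleGraph V}

theorem exists_adj_of_card_eq_max_indep {m : ℕ}
    (hub : ∀ S : Finset V, (∀ A ∈ S, ∀ B ∈ S, ¬ G.Adj A B) → #S ≤ m)
    {S : Finset V} (hS : ∀ A ∈ S, ∀ B ∈ S, ¬ G.Adj A B) (hcard : #S = m)
    {v : V} (hv : v ∉ S) : ∃ w ∈ S, G.Adj v w := by
  classical
  by_contra! hnone
  have hindep : ∀ A ∈ insert v S, ∀ B ∈ insert v S, ¬ G.Adj A B := by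
    intro A hA B hB
    rcases mem_insert.mp hA with rfl | hAS <;> rcases mem_insert.mp hB with rfl | hBS
    · exact G.loopless.irrefl _
    · exact hnone B hBS
    · exact fun h => hnone A hAS h.symm
    · exact hS A hAS B hBS
  have := hub _ hindep
  rw [card_insert_of_notMem hv, hcard] at this
  omega

end SimpleGraph

namespace kneser

variable {n k : ℕ}

def star (n k : ℕ) (x : Fin n) : Finset {s : Finset (Fin n) // s.card = k} :=
  {A | x ∈ A.1}

theorem card_star (hk : 1 ≤ k) (x : Fin n) : #(star n k x) = (n - 1).choose (k - 1) := by
  have h := card_filter_powersetCard_subset {x} univ k (subset_univ _) (by simpa)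
  rw [card_singleton, card_univ, Fintype.card_fin] at h
  rw [← h]
  refine card_nbij (·.1) ?_ Subtype.val_injective.injOn ?_
  · intro A hA
    simpa [star, A.2] using hA
  · intro s hs
    simp only [coe_filter, mem_powersetCard_univ, singleton_subset_iff, Set.mem_ofPred_eq] at hs
    exact ⟨⟨s, hs.1⟩, by simp [star, hs.2], rfl⟩

theorem not_adj_of_mem_star {G : SimpleGraph {s : Finset (Fin n) // s.card = k}}
    (hle : G ≤ kneser n k) {x : Fin n} {A B : {s : Finset (Fin n) // s.card = k}}
    (hA : A ∈ star n k x) (hB : B ∈ star n k x) : ¬ G.Adj A B := fun hAB =>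
  disjoint_left.mp (hle hAB).2 (mem_filter.mp hA).2 (mem_filter.mp hB).2

theorem sub_le_mul_degree (hk : 1 ≤ k) {G : SimpleGraph {s : Finset (Fin n) // s.card = k}}
    [DecidableRel G.Adj] (hle : G ≤ kneser n k)
    (hub : ∀ S : Finset {s : Finset (Fin n) // s.card = k},
      (∀ A ∈ S, ∀ B ∈ S, ¬ G.Adj A B) → #S ≤ (n - 1).choose (k - 1))
    (F : {s : Finset (Fin n) // s.card = k}) :
    (n : ℝ) - k ≤ k * G.degree F := by
  have hcover : F.1ᶜ ⊆ (G.neighborFinset F).biUnion (·.1) := by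
    intro x hx
    have hF : F ∉ star n k x := by simpa [star] using hx
    obtain ⟨A, hA, hFA⟩ := SimpleGraph.exists_adj_of_card_eq_max_indep hub
      (fun _ hA _ hB => not_adj_of_mem_star hle hA hB) (card_star hk x) hF
    exact mem_biUnion.mpr ⟨A, (G.mem_neighborFinset F A).mpr hFA, (mem_filter.mp hA).2⟩
  have hcount : #F.1ᶜ ≤ G.degree F * k :=
    (card_le_card hcover).trans (card_biUnion_le_card_mul _ _ _ fun A _ => A.2.le)
  have hkn : k ≤ n := F.2 ▸ (card_le_univ F.1).trans_eq (Fintype.card_fin n)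
  rw [card_compl, Fintype.card_fin, F.2] at hcount
  rw [← Nat.cast_sub hkn, mul_comm]
  exact_mod_cast hcount

end kneser

theorem sparse_subgraph_lower_bound_general (n k : ℕ) (hk : 1 ≤ k)
    (G : SimpleGraph {s : Finset (Fin n) // s.card = k})
    [DecidableRel G.Adj] (hle : G ≤ kneser n k)
    (hub : ∀ S : Finset {s : Finset (Fin n) // s.card = k},
      (∀ A ∈ S, ∀ B ∈ S, ¬ G.Adj A B) → S.card ≤ (n - 1).choose (k - 1)) :
    ((G.edgeFinset.card : ℝ)) ≥ (((n : ℝ) - k) / (2 * k)) * (n.choose k : ℝ) := by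
  have hsum : (n.choose k : ℝ) * (n - k) ≤ k * (2 * #G.edgeFinset) :=
    calc (n.choose k : ℝ) * (n - k)
        = ∑ _F : {s : Finset (Fin n) // s.card = k}, ((n : ℝ) - k) := by
          simp [Fintype.card_finset_len, mul_sub]
      _ ≤ ∑ F, (k : ℝ) * G.degree F := sum_le_sum fun F _ => kneser.sub_le_mul_degree hk hle hub F
      _ = k * (2 * #G.edgeFinset) := by
          rw [← mul_sum]
          exact_mod_cast congrArg (k * ·) G.sum_degrees_eq_twice_card_edges
  rw [ge_iff_le, div_mul_eq_mul_div, div_le_iff₀ (by positivity)]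
  linarith

/-- A spanning subgraph of K(n,k) with independence number C(n-1,k-1) has at
least ((n-k)/(2k))·C(n,k) edges. -/
theorem sparse_subgraph_lower_bound (n k : ℕ) (hk : 1 ≤ k) (hn : 2 * k ≤ n)
    (G : SimpleGraph {s : Finset (Fin n) // s.card = k})
    [DecidableRel G.Adj] (hle : G ≤ kneser n k)
    (hub : ∀ S : Finset {s : Finset (Fin n) // s.card = k},
      (∀ A ∈ S, ∀ B ∈ S, ¬ G.Adj A B) → S.card ≤ (n - 1).choose (k - 1))
    (hex : ∃ S : Finset {s : Finset (Fin n) // s.card = k},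
      (∀ A ∈ S, ∀ B ∈ S, ¬ G.Adj A B) ∧ S.card = (n - 1).choose (k - 1)) :
    ((G.edgeFinset.card : ℝ)) ≥ (((n : ℝ) - k) / (2 * k)) * (n.choose k : ℝ) :=
  sparse_subgraph_lower_bound_general n k hk G hle hub
end
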